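/- arXiv:2006.04100 — 13 statements merged into one kernel-verified Lean document; each statement's English description precedes it below -/
import Mathlib

section
/- Assume additionally that E satisfies property N(2) and that no two distinct vertices are equivalent. Then the digraph has no directed circuit of length greater than 2: there is no sequence of vertices v₀, v₁, …, v_m with m ≥ 3, v_m = v₀, E v_i v_{i+1} for all 0 ≤ i < m, and the ordered pairs (v_i, v_{i+1}) for 0 ≤ i < m pairwise distinct. -/
/-!
A closed walk in a 2-coloured digraph has even length, and under N(2) every walk of odd length
`2k + 1` can be shortened to a single edge. On a circuit `v₀ → v₁ → ⋯ → v_m = v₀` with `m ≥ 4`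
even, this yields the closed walks `v₀ → v₁ → v₂ → v_{m-1} → v₀` and `v₁ → v₂ → v₃ → v₀ → v₁`
of length 4. Opposite vertices of a closed 4-walk are equivalent under N(2), so `v₀ = v₂` and
`v₁ = v₃`, and the circuit uses the edge `(v₀, v₁)` twice.
-/

namespace Relation

variable {V : Type*} (E : V → V → Prop)

def IsWalk (v : ℕ → V) (n : ℕ) : Prop :=
  ∀ i < n, E (v i) (v (i + 1))

variable {E}

theorem IsWalk.color_eq_iff_even {v : ℕ → V} {n : ℕ} (hv : IsWalk E v n) {σ : V → Bool}
    (hσ : ∀ u w, E u w → σ u ≠ σ w) {i : ℕ} (hi : i ≤ n) :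
    σ (v i) = σ (v 0) ↔ Even i := by
  induction i with
  | zero => simp
  | succ i ih =>
    rw [Nat.even_add_one, ← ih (by omega)]
    have hne := hσ _ _ (hv i (by omega))
    revert hne
    cases σ (v i) <;> cases σ (v (i + 1)) <;> cases σ (v 0) <;> simp

theorem IsWalk.even_of_closed {v : ℕ → V} {n : ℕ} (hv : IsWalk E v n) {σ : V → Bool}
    (hσ : ∀ u w, E u w → σ u ≠ σ w) (hclosed : v n = v 0) : Even n :=
  (hv.color_eq_iff_even hσ le_rfl).1 (congrArg σ hclosed)

theorem IsWalk.adj_of_odd (hN2 : ∀ u a b c, E u a → E a b → E b c → E u c)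
    {v : ℕ → V} {n : ℕ} (hv : IsWalk E v n) {i j : ℕ} (hij : i ≤ j) (hjn : j ≤ n)
    (hodd : Odd (j - i)) : E (v i) (v j) := by
  obtain ⟨k, hk⟩ := hodd
  obtain rfl : j = i + 2 * k + 1 := by omega
  clear hij hk
  induction k with
  | zero => exact hv i (by omega)
  | succ k ih =>
    have := hN2 _ _ _ _ (ih (by omega)) (hv _ (by omega)) (hv _ (by omega))
    rwa [show i + 2 * k + 1 + 1 + 1 = i + 2 * (k + 1) + 1 by ring] at this

theorem eq_of_closed_walk_four (hN2 : ∀ u a b c, E u a → E a b → E b c → E u c)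
    (hnoeq : ∀ u v : V, {x | E u x} = {x | E v x} → {x | E x u} = {x | E x v} → u = v)
    {a b c d : V} (hab : E a b) (hbc : E b c) (hcd : E c d) (hda : E d a) : a = c := by
  apply hnoeq
  · ext x
    exact ⟨hN2 c d a x hcd hda, hN2 a b c x hab hbc⟩
  · ext x
    exact ⟨fun hxa => hN2 x a b c hxa hab hbc, fun hxc => hN2 x c d a hxc hcd hda⟩

end Relation

theorem stmt_0_general {V : Type*} (E : V → V → Prop)
    (σ : V → Bool) (hbip : ∀ u v, E u v → σ u ≠ σ v)
    (hN2 : ∀ u a b c, E u a → E a b → E b c → E u c)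
    (hnoeq : ∀ u v : V, {x | E u x} = {x | E v x} → {x | E x u} = {x | E x v} → u = v) :
    ¬ ∃ (m : ℕ) (v : ℕ → V), 3 ≤ m ∧ v m = v 0 ∧
      (∀ i < m, E (v i) (v (i + 1))) ∧
      (∀ i < m, ∀ j < m, i ≠ j → (v i, v (i + 1)) ≠ (v j, v (j + 1))) := by
  rintro ⟨m, v, hm, hclosed, hwalk, hdist⟩
  have hwalk : Relation.IsWalk E v m := hwalk
  obtain ⟨k, hk⟩ : ∃ k, m = 2 * k + 4 := by
    obtain ⟨r, hr⟩ := hwalk.even_of_closed hbip hclosed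
    exact ⟨r - 2, by omega⟩
  have hlast : E (v (m - 1)) (v 0) := by
    simpa [show m - 1 + 1 = m by omega, hclosed] using hwalk (m - 1) (by omega)
  have h02 : v 0 = v 2 :=
    Relation.eq_of_closed_walk_four hN2 hnoeq (hwalk 0 (by omega)) (hwalk 1 (by omega))
      (hwalk.adj_of_odd hN2 (by omega) (by omega) ⟨k, by omega⟩) hlast
  have h13 : v 1 = v 3 :=
    Relation.eq_of_closed_walk_four hN2 hnoeq (hwalk 1 (by omega)) (hwalk 2 (by omega))
      (hclosed ▸ hwalk.adj_of_odd hN2 (by omega) le_rfl ⟨k, by omega⟩) (hwalk 0 (by omega))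
  exact hdist 0 (by omega) 2 (by omega) (by decide) (by rw [h02, h13])

theorem stmt_0 {V : Type*} (E : V → V → Prop)
    (hirr : ∀ u, ¬ E u u)
    (hout : ∀ u, ∃ v, E u v)
    (σ : V → Bool) (hbip : ∀ u v, E u v → σ u ≠ σ v)
    (hN2 : ∀ u a b c, E u a → E a b → E b c → E u c)
    (hnoeq : ∀ u v : V, {x | E u x} = {x | E v x} → {x | E x u} = {x | E x v} → u = v) :
    ¬ ∃ (m : ℕ) (v : ℕ → V), 3 ≤ m ∧ v m = v 0 ∧
      (∀ i < m, E (v i) (v (i + 1))) ∧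
      (∀ i < m, ∀ j < m, i ≠ j → (v i, v (i + 1)) ≠ (v j, v (j + 1))) :=
  stmt_0_general E σ hbip hN2 hnoeq
end

section
/- Assume additionally that E satisfies property N(2). Then every directed cycle of the quotient graph has length 2: if x̄₀, x̄₁, …, x̄_m is a sequence of equivalence classes with m ≥ 1, x̄_m = x̄₀, Ē x̄_i x̄_{i+1} for all 0 ≤ i < m, and the classes x̄₀, …, x̄_{m−1} are pairwise distinct, then m = 2, so the cycle consists of the pair of symmetric edges Ē x̄₀ x̄₁ and Ē x̄₁ x̄₀. -/
/-!
Lift the cycle to representatives `p 0, …, p m = p 0`. Bipartiteness forces `m` to be even.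
N(2) says that an odd walk `u ⇝ w` yields an edge `E u w`, so vertices joined by even walks in
both directions have the same in- and out-neighbourhoods. Since `p 0 ⇝ p 2` and `p 2 ⇝ p m = p 0`
are even walks, `x 0 = x 2`, so distinctness forces `m = 2`.
-/

def equivSetoid {V : Type*} (E : V → V → Prop) : Setoid V where
  r u v := ({x | E u x} = {x | E v x}) ∧ ({x | E x u} = {x | E x v})
  iseqv := ⟨fun _ => ⟨rfl, rfl⟩, fun h => ⟨h.1.symm, h.2.symm⟩,
    fun h1 h2 => ⟨h1.1.trans h2.1, h1.2.trans h2.2⟩⟩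

/-- The edge relation of the quotient graph: `Ebar A B` holds iff `E a b`
for every representative `a` of the class `A` and `b` of the class `B`. -/
def Ebar {V : Type*} (E : V → V → Prop) (A B : Quotient (equivSetoid E)) : Prop :=
  ∀ a b : V, Quotient.mk (equivSetoid E) a = A → Quotient.mk (equivSetoid E) b = B → E a b

open Relation

section

variable {V : Type*} {E : V → V → Prop} {p : ℕ → V} {n : ℕ}

theorem colour_eq_iff_even_of_walk (σ : V → Bool) (hbip : ∀ u v, E u v → σ u ≠ σ v)
    (hp : ∀ i < n, E (p i) (p (i + 1))) : ∀ i ≤ n, (σ (p i) = σ (p 0) ↔ Even i) := by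
  intro i
  induction i with
  | zero => simp
  | succ i ih =>
    intro hi
    rw [Nat.even_add_one, ← ih (by omega)]
    have hne := hbip _ _ (hp i (by omega))
    revert hne
    cases σ (p i) <;> cases σ (p (i + 1)) <;> cases σ (p 0) <;> simp

theorem even_of_closed_walk (σ : V → Bool) (hbip : ∀ u v, E u v → σ u ≠ σ v)
    (hp : ∀ i < n, E (p i) (p (i + 1))) (hclosed : p n = p 0) : Even n :=
  (colour_eq_iff_even_of_walk σ hbip hp n le_rfl).1 (congrArg σ hclosed)

theorem reflTransGen_comp_of_walk (hp : ∀ i < n, E (p i) (p (i + 1))) (j : ℕ) :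
    ∀ k, j + 2 * k ≤ n → ReflTransGen (Comp E E) (p j) (p (j + 2 * k)) := by
  intro k
  induction k with
  | zero => intro _; exact .refl
  | succ k ih =>
    intro hk
    rw [show j + 2 * (k + 1) = j + 2 * k + 1 + 1 by ring]
    exact (ih (by omega)).tail ⟨_, hp _ (by omega), hp _ (by omega)⟩

theorem edge_of_reflTransGen_comp_of_edge (hN2 : ∀ u a b c, E u a → E a b → E b c → E u c)
    {u v w : V} (huv : ReflTransGen (Comp E E) u v) (hvw : E v w) : E u w := by
  induction huv using ReflTransGen.head_induction_on with
  | refl => exact hvw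
  | head hstep _ ih =>
    obtain ⟨a, hua, hab⟩ := hstep
    exact hN2 _ _ _ _ hua hab ih

theorem edge_of_edge_of_reflTransGen_comp (hN2 : ∀ u a b c, E u a → E a b → E b c → E u c)
    {u v w : V} (huv : E u v) (hvw : ReflTransGen (Comp E E) v w) : E u w := by
  induction hvw with
  | refl => exact huv
  | tail _ hstep ih =>
    obtain ⟨a, hba, hac⟩ := hstep
    exact hN2 _ _ _ _ ih hba hac

theorem mk_eq_of_reflTransGen_comp (hN2 : ∀ u a b c, E u a → E a b → E b c → E u c)
    {u v : V} (huv : ReflTransGen (Comp E E) u v)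
    (hvu : ReflTransGen (Comp E E) v u) :
    Quotient.mk (equivSetoid E) u = Quotient.mk (equivSetoid E) v :=
  Quotient.sound
    ⟨Set.ext fun _ => ⟨edge_of_reflTransGen_comp_of_edge hN2 hvu,
        edge_of_reflTransGen_comp_of_edge hN2 huv⟩,
      Set.ext fun _ => ⟨(edge_of_edge_of_reflTransGen_comp hN2 · huv),
        (edge_of_edge_of_reflTransGen_comp hN2 · hvu)⟩⟩

end

theorem stmt_1_general {V : Type*} (E : V → V → Prop)
    (σ : V → Bool) (hbip : ∀ u v, E u v → σ u ≠ σ v)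
    (hN2 : ∀ u a b c, E u a → E a b → E b c → E u c)
    (m : ℕ) (x : ℕ → Quotient (equivSetoid E))
    (hm : 1 ≤ m) (hclosed : x m = x 0)
    (hedges : ∀ i < m, Ebar E (x i) (x (i + 1)))
    (hdistinct : ∀ i < m, ∀ j < m, i ≠ j → x i ≠ x j) :
    m = 2 ∧ Ebar E (x 0) (x 1) ∧ Ebar E (x 1) (x 0) := by
  set p : ℕ → V := fun i => (x i).out
  have hmk : ∀ i, Quotient.mk (equivSetoid E) (p i) = x i := fun i => Quotient.out_eq _
  have hp : ∀ i < m, E (p i) (p (i + 1)) :=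
    fun i hi => hedges i hi _ _ (hmk i) (hmk (i + 1))
  have hpclosed : p m = p 0 := congrArg Quotient.out hclosed
  obtain ⟨r, hr⟩ := even_of_closed_walk σ hbip hp hpclosed
  have hm2 : m = 2 := by
    by_contra hne
    refine hdistinct 0 (by omega) 2 (by omega) (by omega) ?_
    have h02 := reflTransGen_comp_of_walk hp 0 1 (by omega)
    have h20 := reflTransGen_comp_of_walk hp 2 (r - 1) (by omega)
    rw [show 2 + 2 * (r - 1) = m by omega, hpclosed] at h20
    rw [← hmk 0, ← hmk 2]
    exact mk_eq_of_reflTransGen_comp hN2 h02 h20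
  refine ⟨hm2, hedges 0 (by omega), ?_⟩
  simpa [hm2 ▸ hclosed] using hedges 1 (by omega)

theorem stmt_1 {V : Type*} (E : V → V → Prop)
    (hirr : ∀ u, ¬ E u u)
    (hout : ∀ u, ∃ v, E u v)
    (σ : V → Bool) (hbip : ∀ u v, E u v → σ u ≠ σ v)
    (hN2 : ∀ u a b c, E u a → E a b → E b c → E u c)
    (m : ℕ) (x : ℕ → Quotient (equivSetoid E))
    (hm : 1 ≤ m) (hclosed : x m = x 0)
    (hedges : ∀ i < m, Ebar E (x i) (x (i + 1)))
    (hdistinct : ∀ i < m, ∀ j < m, i ≠ j → x i ≠ x j) :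
    m = 2 ∧ Ebar E (x 0) (x 1) ∧ Ebar E (x 1) (x 0) :=
  stmt_1_general E σ hbip hN2 m x hm hclosed hedges hdistinct
end

section
/- Assume additionally that E satisfies properties N(1) and N(2). Let u and v be independent vertices (¬E u v and ¬E v u) with no common out-neighbour (N(u) ∩ N(v) = ∅). Then for every vertex w, it is not the case that both u and v are strongly connected to w; i.e. ¬(Relation.TransGen E u w ∧ Relation.TransGen E v w). -/
/-!
Bitransitivity shortcuts any walk of length three, so every walk collapses to one of length
one or two. If `u` and `v` both reached `w`, the two short walks would either end in a common
out-neighbour of `u` and `v` (after extending two walks of length two by an out-edge of `w`),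
or violate `N(1)`.
-/

namespace Relation

theorem TransGen.rel_or_comp_of_bitransitive {V : Type*} {E : V → V → Prop}
    (hE : ∀ a b c d, E a b → E b c → E c d → E a d) {a w : V} (h : TransGen E a w) :
    E a w ∨ Comp E E a w := by
  induction h with
  | single h => exact .inl h
  | tail _ hbc ih =>
    rcases ih with hab | ⟨y, hay, hyb⟩
    · exact .inr ⟨_, hab, hbc⟩
    · exact .inl (hE _ _ _ _ hay hyb hbc)

end Relation

theorem stmt_2_general {V : Type*} (E : V → V → Prop)
    (hout : ∀ u, ∃ v, E u v)
    (hN1 : ∀ u v : V, u ≠ v → ¬ E u v → ¬ E v u →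
      {x | E u x} ∩ {x | ∃ y, E v y ∧ E y x} = ∅ ∧
      {x | E v x} ∩ {x | ∃ y, E u y ∧ E y x} = ∅)
    (hN2 : ∀ u a b c, E u a → E a b → E b c → E u c)
    (u v : V) (huv : ¬ E u v) (hvu : ¬ E v u)
    (hdisj : {x | E u x} ∩ {x | E v x} = ∅) :
    ∀ w : V, ¬ (Relation.TransGen E u w ∧ Relation.TransGen E v w) := by
  have hcommon : ∀ x, E u x → ¬ E v x := fun x hux hvx =>
    Set.eq_empty_iff_forall_notMem.mp hdisj x ⟨hux, hvx⟩
  have hne : u ≠ v := by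
    rintro rfl
    obtain ⟨x, hx⟩ := hout u
    exact hcommon x hx hx
  obtain ⟨hN1u, hN1v⟩ := hN1 u v hne huv hvu
  rintro w ⟨hu, hv⟩
  rcases hu.rel_or_comp_of_bitransitive hN2 with huw | ⟨y, huy, hyw⟩ <;>
    rcases hv.rel_or_comp_of_bitransitive hN2 with hvw | ⟨z, hvz, hzw⟩
  · exact hcommon w huw hvw
  · exact Set.eq_empty_iff_forall_notMem.mp hN1u w ⟨huw, z, hvz, hzw⟩
  · exact Set.eq_empty_iff_forall_notMem.mp hN1v w ⟨hvw, y, huy, hyw⟩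
  · obtain ⟨x, hwx⟩ := hout w
    exact hcommon x (hN2 u y w x huy hyw hwx) (hN2 v z w x hvz hzw hwx)

theorem stmt_2 {V : Type*} (E : V → V → Prop)
    (hirr : ∀ u, ¬ E u u)
    (hout : ∀ u, ∃ v, E u v)
    (σ : V → Bool) (hbip : ∀ u v, E u v → σ u ≠ σ v)
    (hN1 : ∀ u v : V, u ≠ v → ¬ E u v → ¬ E v u →
      {x | E u x} ∩ {x | ∃ y, E v y ∧ E y x} = ∅ ∧
      {x | E v x} ∩ {x | ∃ y, E u y ∧ E y x} = ∅)
    (hN2 : ∀ u a b c, E u a → E a b → E b c → E u c)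
    (u v : V) (huv : ¬ E u v) (hvu : ¬ E v u)
    (hdisj : {x | E u x} ∩ {x | E v x} = ∅) :
    ∀ w : V, ¬ (Relation.TransGen E u w ∧ Relation.TransGen E v w) :=
  stmt_2_general E hout hN1 hN2 u v huv hvu hdisj
end

section
/- Assume additionally that E satisfies properties N(2) and N(3). Let u and v be vertices that are not equivalent, have a common out-neighbour (N(u) ∩ N(v) ≠ ∅), and such that there is no directed path of length 2 from u to v nor from v to u (u ∉ N(N(v)) and v ∉ N(N(u))). Then at least one of u and v is not an endpoint of a symmetric edge: ¬(∃ w, E u w ∧ E w u) or ¬(∃ w, E v w ∧ E w v). -/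
theorem not_exists_symm_edge_of_inNbhd_eq {V : Type*} {E : V → V → Prop} {u v : V}
    (hin : {x | E x u} = {x | E x v}) (hpath : ¬ ∃ y, E u y ∧ E y v) :
    ¬ ∃ w, E u w ∧ E w u := by
  rintro ⟨w, huw, hwu⟩
  have hwv : w ∈ {x | E x v} := hin ▸ hwu
  exact hpath ⟨w, huw, hwv⟩

theorem stmt_3_general {V : Type*} (E : V → V → Prop)
    (hN3 : ∀ u v : V, u ≠ v → ({x | E u x} ∩ {x | E v x}).Nonempty →
      ¬ (∃ y, E v y ∧ E y u) → ¬ (∃ y, E u y ∧ E y v) →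
      ({x | E x u} = {x | E x v} ∧
        ({x | E u x} ⊆ {x | E v x} ∨ {x | E v x} ⊆ {x | E u x})))
    (u v : V)
    (hcommon : ({x | E u x} ∩ {x | E v x}).Nonempty)
    (hpath1 : ¬ (∃ y, E v y ∧ E y u))
    (hpath2 : ¬ (∃ y, E u y ∧ E y v)) :
    ¬ (∃ w, E u w ∧ E w u) ∨ ¬ (∃ w, E v w ∧ E w v) := by
  left
  by_cases huv : u = v
  · subst huv
    exact hpath2
  · exact not_exists_symm_edge_of_inNbhd_eq (hN3 u v huv hcommon hpath1 hpath2).1 hpath2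

theorem stmt_3 {V : Type*} (E : V → V → Prop)
    (hirr : ∀ u, ¬ E u u)
    (hout : ∀ u, ∃ v, E u v)
    (σ : V → Bool) (hbip : ∀ u v, E u v → σ u ≠ σ v)
    (hN2 : ∀ u a b c, E u a → E a b → E b c → E u c)
    (hN3 : ∀ u v : V, u ≠ v → ({x | E u x} ∩ {x | E v x}).Nonempty →
      ¬ (∃ y, E v y ∧ E y u) → ¬ (∃ y, E u y ∧ E y v) →
      ({x | E x u} = {x | E x v} ∧
        ({x | E u x} ⊆ {x | E v x} ∨ {x | E v x} ⊆ {x | E u x})))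
    (u v : V)
    (hne : ¬ ({x | E u x} = {x | E v x} ∧ {x | E x u} = {x | E x v}))
    (hcommon : ({x | E u x} ∩ {x | E v x}).Nonempty)
    (hpath1 : ¬ (∃ y, E v y ∧ E y u))
    (hpath2 : ¬ (∃ y, E u y ∧ E y v)) :
    ¬ (∃ w, E u w ∧ E w u) ∨ ¬ (∃ w, E v w ∧ E w v) :=
  stmt_3_general E hN3 u v hcommon hpath1 hpath2
end

section
/- Assume additionally that E satisfies property N(2). Let α₁ and α₂ be distinct vertices with σ α₁ = σ α₂ (the same color), and suppose there exist vertices β₁, β₂ (not necessarily distinct) with E α₁ β₂, E α₂ β₁, E β₂ α₂, and E β₁ α₁. Then α₁ and α₂ are equivalent: N(α₁) = N(α₂) and N⁻(α₁) = N⁻(α₂). -/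
theorem outNeighbors_subset_of_path {V : Type*} {E : V → V → Prop}
    (hN2 : ∀ u a b c, E u a → E a b → E b c → E u c) {a b c : V}
    (hab : E a b) (hbc : E b c) : {x | E c x} ⊆ {x | E a x} :=
  fun _ hcx => hN2 a b c _ hab hbc hcx

theorem inNeighbors_subset_of_path {V : Type*} {E : V → V → Prop}
    (hN2 : ∀ u a b c, E u a → E a b → E b c → E u c) {a b c : V}
    (hab : E a b) (hbc : E b c) : {x | E x a} ⊆ {x | E x c} :=
  fun _ hxa => hN2 _ a b c hxa hab hbc

theorem stmt_7_general {V : Type*} (E : V → V → Prop)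
    (hN2 : ∀ u a b c, E u a → E a b → E b c → E u c)
    (α₁ α₂ : V)
    (β₁ β₂ : V)
    (h1 : E α₁ β₂) (h2 : E α₂ β₁) (h3 : E β₂ α₂) (h4 : E β₁ α₁) :
    {x | E α₁ x} = {x | E α₂ x} ∧ {x | E x α₁} = {x | E x α₂} :=
  ⟨(outNeighbors_subset_of_path hN2 h2 h4).antisymm (outNeighbors_subset_of_path hN2 h1 h3),
    (inNeighbors_subset_of_path hN2 h1 h3).antisymm (inNeighbors_subset_of_path hN2 h2 h4)⟩

theorem stmt_7 {V : Type*} (E : V → V → Prop)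
    (hirr : ∀ u, ¬ E u u)
    (hout : ∀ u, ∃ v, E u v)
    (σ : V → Bool) (hbip : ∀ u v, E u v → σ u ≠ σ v)
    (hN2 : ∀ u a b c, E u a → E a b → E b c → E u c)
    (α₁ α₂ : V) (hne : α₁ ≠ α₂) (hcol : σ α₁ = σ α₂)
    (β₁ β₂ : V)
    (h1 : E α₁ β₂) (h2 : E α₂ β₁) (h3 : E β₂ α₂) (h4 : E β₁ α₁) :
    {x | E α₁ x} = {x | E α₂ x} ∧ {x | E x α₁} = {x | E x α₂} :=
  stmt_7_general E hN2 α₁ α₂ β₁ β₂ h1 h2 h3 h4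
end

section
/- Assume additionally that E satisfies property N(2) and that no two distinct vertices are equivalent. Then for every vertex u there is at most one vertex v such that both E u v and E v u hold: if E u v₁, E v₁ u, E u v₂, and E v₂ u, then v₁ = v₂. -/
section Bitransitive

variable {V : Type*} {E : V → V → Prop}

theorem setOf_out_subset_of_edge_of_edge (hN2 : ∀ u a b c, E u a → E a b → E b c → E u c)
    {w u v : V} (hwu : E w u) (huv : E u v) :
    {x | E v x} ⊆ {x | E w x} :=
  fun _ hvx => hN2 w u v _ hwu huv hvx

theorem setOf_in_subset_of_edge_of_edge (hN2 : ∀ u a b c, E u a → E a b → E b c → E u c)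
    {v u w : V} (hvu : E v u) (huw : E u w) :
    {x | E x v} ⊆ {x | E x w} :=
  fun _ hxv => hN2 _ v u w hxv hvu huw

end Bitransitive

theorem stmt_8_general {V : Type*} (E : V → V → Prop)
    (hN2 : ∀ u a b c, E u a → E a b → E b c → E u c)
    (hnoeq : ∀ u v : V, {x | E u x} = {x | E v x} → {x | E x u} = {x | E x v} → u = v)
    (u v₁ v₂ : V)
    (h1 : E u v₁) (h2 : E v₁ u) (h3 : E u v₂) (h4 : E v₂ u) :
    v₁ = v₂ :=
  hnoeq v₁ v₂
    ((setOf_out_subset_of_edge_of_edge hN2 h4 h1).antisymm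
      (setOf_out_subset_of_edge_of_edge hN2 h2 h3))
    ((setOf_in_subset_of_edge_of_edge hN2 h2 h3).antisymm
      (setOf_in_subset_of_edge_of_edge hN2 h4 h1))

theorem stmt_8 {V : Type*} (E : V → V → Prop)
    (hirr : ∀ u, ¬ E u u)
    (hout : ∀ u, ∃ v, E u v)
    (σ : V → Bool) (hbip : ∀ u v, E u v → σ u ≠ σ v)
    (hN2 : ∀ u a b c, E u a → E a b → E b c → E u c)
    (hnoeq : ∀ u v : V, {x | E u x} = {x | E v x} → {x | E x u} = {x | E x v} → u = v)
    (u v₁ v₂ : V)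
    (h1 : E u v₁) (h2 : E v₁ u) (h3 : E u v₂) (h4 : E v₂ u) :
    v₁ = v₂ :=
  stmt_8_general E hN2 hnoeq u v₁ v₂ h1 h2 h3 h4
end

section
/- Assume additionally that E satisfies property N(2) and that no two distinct vertices are equivalent. Then the digraph has no directed circuit of length four: if a, b, c, d are vertices with E a b, E b c, E c d, and E d a, then a = c and b = d (equivalently, the four edges (a,b), (b,c), (c,d), (d,a) cannot be pairwise distinct). -/
theorem outNeighbours_eq_and_inNeighbours_eq_of_four_circuit {V : Type*} {E : V → V → Prop}
    (hN2 : ∀ u a b c, E u a → E a b → E b c → E u c) {u a w b : V}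
    (hua : E u a) (haw : E a w) (hwb : E w b) (hbu : E b u) :
    {x | E u x} = {x | E w x} ∧ {x | E x u} = {x | E x w} := by
  constructor
  · ext x
    exact ⟨fun hux => hN2 w b u x hwb hbu hux, fun hwx => hN2 u a w x hua haw hwx⟩
  · ext x
    exact ⟨fun hxu => hN2 x u a w hxu hua haw, fun hxw => hN2 x w b u hxw hwb hbu⟩

theorem stmt_9_general {V : Type*} (E : V → V → Prop)
    (hN2 : ∀ u a b c, E u a → E a b → E b c → E u c)
    (hnoeq : ∀ u v : V, {x | E u x} = {x | E v x} → {x | E x u} = {x | E x v} → u = v)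
    (a b c d : V)
    (h1 : E a b) (h2 : E b c) (h3 : E c d) (h4 : E d a) :
    a = c ∧ b = d := by
  obtain ⟨hout_ac, hin_ac⟩ := outNeighbours_eq_and_inNeighbours_eq_of_four_circuit hN2 h1 h2 h3 h4
  obtain ⟨hout_bd, hin_bd⟩ := outNeighbours_eq_and_inNeighbours_eq_of_four_circuit hN2 h2 h3 h4 h1
  exact ⟨hnoeq a c hout_ac hin_ac, hnoeq b d hout_bd hin_bd⟩

theorem stmt_9 {V : Type*} (E : V → V → Prop)
    (hirr : ∀ u, ¬ E u u)
    (hout : ∀ u, ∃ v, E u v)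
    (σ : V → Bool) (hbip : ∀ u v, E u v → σ u ≠ σ v)
    (hN2 : ∀ u a b c, E u a → E a b → E b c → E u c)
    (hnoeq : ∀ u v : V, {x | E u x} = {x | E v x} → {x | E x u} = {x | E x v} → u = v)
    (a b c d : V)
    (h1 : E a b) (h2 : E b c) (h3 : E c d) (h4 : E d a) :
    a = c ∧ b = d :=
  stmt_9_general E hN2 hnoeq a b c d h1 h2 h3 h4
end

section
/- Assume additionally that E satisfies property N(2). Then for any two vertices u and v, if N(u) ∩ N(v) = ∅, then N(N(u)) ∩ N(N(v)) = ∅. -/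
theorem inter_out_nonempty_of_two_step {V : Type*} {E : V → V → Prop}
    (hout : ∀ u, ∃ v, E u v) (hN2 : ∀ u a b c, E u a → E a b → E b c → E u c)
    {u v x : V} (hu : ∃ y, E u y ∧ E y x) (hv : ∃ z, E v z ∧ E z x) :
    ({w | E u w} ∩ {w | E v w}).Nonempty := by
  obtain ⟨y, huy, hyx⟩ := hu
  obtain ⟨z, hvz, hzx⟩ := hv
  obtain ⟨w, hxw⟩ := hout x
  exact ⟨w, hN2 u y x w huy hyx hxw, hN2 v z x w hvz hzx hxw⟩

theorem stmt_10_general {V : Type*} (E : V → V → Prop)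
    (hout : ∀ u, ∃ v, E u v)
    (hN2 : ∀ u a b c, E u a → E a b → E b c → E u c)
    (u v : V) (hdisj : {x | E u x} ∩ {x | E v x} = ∅) :
    {x | ∃ y, E u y ∧ E y x} ∩ {x | ∃ y, E v y ∧ E y x} = ∅ :=
  Set.eq_empty_of_forall_notMem fun _ ⟨hu, hv⟩ =>
    (inter_out_nonempty_of_two_step hout hN2 hu hv).ne_empty hdisj

theorem stmt_10 {V : Type*} (E : V → V → Prop)
    (hirr : ∀ u, ¬ E u u)
    (hout : ∀ u, ∃ v, E u v)
    (σ : V → Bool) (hbip : ∀ u v, E u v → σ u ≠ σ v)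
    (hN2 : ∀ u a b c, E u a → E a b → E b c → E u c)
    (u v : V) (hdisj : {x | E u x} ∩ {x | E v x} = ∅) :
    {x | ∃ y, E u y ∧ E y x} ∩ {x | ∃ y, E v y ∧ E y x} = ∅ :=
  stmt_10_general E hout hN2 u v hdisj
end

section
/- Assume additionally that E satisfies property N(2). Let u, v, w be vertices all of the same color (σ u = σ v = σ w). If u and v have no common out-neighbour (N(u) ∩ N(v) = ∅), then it is not the case that both u and v are strongly connected to w; i.e. ¬(Relation.TransGen E u w ∧ Relation.TransGen E v w). -/
/-!
In a bipartite digraph with property N(2), a walk of odd length collapses to a single edge: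
E u a, E a b, E b c give E u c. A walk from `u` to `w` with `σ u = σ w` has even length, so
extending it by an out-edge `w → c` gives an odd walk and hence `E u c`. If both `u` and `v`
reached `w`, any out-neighbour of `w` would be a common out-neighbour of `u` and `v`.
-/

open Relation

section Bitransitive

variable {V : Type*} {E : V → V → Prop} {σ : V → Bool}

theorem adj_of_transGen_of_color_ne (hbip : ∀ u v, E u v → σ u ≠ σ v)
    (hN2 : ∀ u a b c, E u a → E a b → E b c → E u c) {x y : V} (hxy : TransGen E x y)
    (hσ : σ x ≠ σ y) : E x y := by
  -- Induct on the walk, tracking odd and even lengths at once.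
  suffices (σ x ≠ σ y → E x y) ∧ (σ x = σ y → ∀ c, E y c → E x c) from this.1 hσ
  clear hσ
  induction hxy with
  | single hxy => exact ⟨fun _ => hxy, fun h => absurd h (hbip _ _ hxy)⟩
  | @tail b y _ hby ih =>
    have hby' := hbip _ _ hby
    refine ⟨fun hxy => ?_, fun hxy c hyc => ?_⟩
    · have hxb : σ x = σ b := (Bool.eq_not_iff.2 hxy).trans (Bool.eq_not_iff.2 hby').symm
      exact ih.2 hxb y hby
    · have hxb : σ x ≠ σ b := fun h => hby' (h.symm.trans hxy)
      exact hN2 x b y c (ih.1 hxb) hby hyc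

theorem adj_of_transGen_of_color_eq (hbip : ∀ u v, E u v → σ u ≠ σ v)
    (hN2 : ∀ u a b c, E u a → E a b → E b c → E u c) {x y c : V} (hxy : TransGen E x y)
    (hσ : σ x = σ y) (hyc : E y c) : E x c :=
  adj_of_transGen_of_color_ne hbip hN2 (hxy.tail hyc) (ne_of_eq_of_ne hσ (hbip _ _ hyc))

end Bitransitive

theorem stmt_11_general {V : Type*} (E : V → V → Prop)
    (hout : ∀ u, ∃ v, E u v)
    (σ : V → Bool) (hbip : ∀ u v, E u v → σ u ≠ σ v)
    (hN2 : ∀ u a b c, E u a → E a b → E b c → E u c)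
    (u v w : V) (hcol1 : σ u = σ v) (hcol2 : σ v = σ w)
    (hdisj : {x | E u x} ∩ {x | E v x} = ∅) :
    ¬ (Relation.TransGen E u w ∧ Relation.TransGen E v w) := by
  rintro ⟨huw, hvw⟩
  obtain ⟨c, hwc⟩ := hout w
  have huc : E u c := adj_of_transGen_of_color_eq hbip hN2 huw (hcol1.trans hcol2) hwc
  have hvc : E v c := adj_of_transGen_of_color_eq hbip hN2 hvw hcol2 hwc
  exact (Set.eq_empty_iff_forall_notMem.1 hdisj c) ⟨huc, hvc⟩

theorem stmt_11 {V : Type*} (E : V → V → Prop)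
    (hirr : ∀ u, ¬ E u u)
    (hout : ∀ u, ∃ v, E u v)
    (σ : V → Bool) (hbip : ∀ u v, E u v → σ u ≠ σ v)
    (hN2 : ∀ u a b c, E u a → E a b → E b c → E u c)
    (u v w : V) (hcol1 : σ u = σ v) (hcol2 : σ v = σ w)
    (hdisj : {x | E u x} ∩ {x | E v x} = ∅) :
    ¬ (Relation.TransGen E u w ∧ Relation.TransGen E v w) :=
  stmt_11_general E hout σ hbip hN2 u v w hcol1 hcol2 hdisj
end

section
/- Assume additionally that E satisfies property N(2). Let u and v be vertices of the same color (σ u = σ v) with no common out-neighbour (N(u) ∩ N(v) = ∅). Then for every vertex w, it is not the case that both u and v are strongly connected to w; i.e. ¬(Relation.TransGen E u w ∧ Relation.TransGen E v w). -/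
/-! Under N(2) every walk can be shortened to length one or two, and in a bipartite digraph the
parity of a walk is fixed by the colours of its ends. So if `w` is reachable from `u` and `v`,
which have the same colour, then either `w` has a different colour and is an out-neighbour of
both, or it has the same colour and every out-neighbour of `w` is an out-neighbour of both. -/

section Bitransitive

variable {V : Type*} {E : V → V → Prop}

theorem adj_or_exists_adj_adj_of_transGen (hN2 : ∀ u a b c, E u a → E a b → E b c → E u c)
    {x w : V} (h : Relation.TransGen E x w) : E x w ∨ ∃ m, E x m ∧ E m w := by
  induction h with
  | single hxw => exact Or.inl hxw
  | tail _ hbw ih =>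
    rcases ih with hxb | ⟨m, hxm, hmb⟩
    · exact Or.inr ⟨_, hxb, hbw⟩
    · exact Or.inl (hN2 _ _ _ _ hxm hmb hbw)

variable (σ : V → Bool) (hbip : ∀ u v, E u v → σ u ≠ σ v)
include hbip

theorem color_eq_of_adj_adj {x m w : V} (hxm : E x m) (hmw : E m w) : σ x = σ w := by
  have h₁ := hbip _ _ hxm
  have h₂ := hbip _ _ hmw
  revert h₁ h₂
  cases σ x <;> cases σ m <;> cases σ w <;> decide

theorem adj_of_transGen_of_color_ne_s12 (hN2 : ∀ u a b c, E u a → E a b → E b c → E u c)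
    {x w : V} (h : Relation.TransGen E x w) (hne : σ x ≠ σ w) : E x w := by
  rcases adj_or_exists_adj_adj_of_transGen hN2 h with hxw | ⟨m, hxm, hmw⟩
  · exact hxw
  · exact absurd (color_eq_of_adj_adj σ hbip hxm hmw) hne

theorem adj_of_transGen_of_color_eq_s12 (hN2 : ∀ u a b c, E u a → E a b → E b c → E u c)
    {x w c : V} (h : Relation.TransGen E x w) (heq : σ x = σ w) (hwc : E w c) : E x c := by
  rcases adj_or_exists_adj_adj_of_transGen hN2 h with hxw | ⟨m, hxm, hmw⟩
  · exact absurd heq (hbip _ _ hxw)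
  · exact hN2 _ _ _ _ hxm hmw hwc

end Bitransitive

theorem stmt_12_general {V : Type*} (E : V → V → Prop)
    (hout : ∀ u, ∃ v, E u v)
    (σ : V → Bool) (hbip : ∀ u v, E u v → σ u ≠ σ v)
    (hN2 : ∀ u a b c, E u a → E a b → E b c → E u c)
    (u v : V) (hcol : σ u = σ v)
    (hdisj : {x | E u x} ∩ {x | E v x} = ∅) :
    ∀ w : V, ¬ (Relation.TransGen E u w ∧ Relation.TransGen E v w) := by
  have no_common : ∀ x, E u x → E v x → False := fun x hux hvx =>
    (hdisj.subset ⟨hux, hvx⟩ : x ∈ (∅ : Set V))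
  rintro w ⟨huw, hvw⟩
  by_cases hw : σ u = σ w
  · obtain ⟨c, hwc⟩ := hout w
    exact no_common c (adj_of_transGen_of_color_eq_s12 σ hbip hN2 huw hw hwc)
      (adj_of_transGen_of_color_eq_s12 σ hbip hN2 hvw (hcol ▸ hw) hwc)
  · exact no_common w (adj_of_transGen_of_color_ne_s12 σ hbip hN2 huw hw)
      (adj_of_transGen_of_color_ne_s12 σ hbip hN2 hvw (hcol ▸ hw))

theorem stmt_12 {V : Type*} (E : V → V → Prop)
    (hirr : ∀ u, ¬ E u u)
    (hout : ∀ u, ∃ v, E u v)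
    (σ : V → Bool) (hbip : ∀ u v, E u v → σ u ≠ σ v)
    (hN2 : ∀ u a b c, E u a → E a b → E b c → E u c)
    (u v : V) (hcol : σ u = σ v)
    (hdisj : {x | E u x} ∩ {x | E v x} = ∅) :
    ∀ w : V, ¬ (Relation.TransGen E u w ∧ Relation.TransGen E v w) :=
  stmt_12_general E hout σ hbip hN2 u v hcol hdisj
end

section
/- Assume additionally that E satisfies properties N(1) and N(2). Let u and v be vertices of different colors (σ u ≠ σ v) that are independent (¬E u v and ¬E v u). Then for every vertex w, it is not the case that both u and v are strongly connected to w; i.e. ¬(Relation.TransGen E u w ∧ Relation.TransGen E v w). -/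
/-!
Bitransitivity collapses every walk to a walk of length one or two, and in a 2-colored digraph a
walk from `u` to `w` has odd length exactly when `σ u ≠ σ w`. So if `u` and `v` both reach `w`,
walks of equal length contradict `σ u ≠ σ v`, and walks of lengths one and two put `w` in
`N(u) ∩ N(N(v))` or `N(v) ∩ N(N(u))`, contradicting N(1).
-/

theorem transGen_iff_adj_or_two_step {V : Type*} {E : V → V → Prop}
    (hN2 : ∀ u a b c, E u a → E a b → E b c → E u c) {a w : V} :
    Relation.TransGen E a w ↔ E a w ∨ ∃ y, E a y ∧ E y w := by
  refine ⟨fun h => ?_, ?_⟩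
  · induction h with
    | single hab => exact .inl hab
    | tail _ hbc ih =>
      rcases ih with hab | ⟨y, hay, hyb⟩
      · exact .inr ⟨_, hab, hbc⟩
      · exact .inl (hN2 _ _ _ _ hay hyb hbc)
  · rintro (haw | ⟨y, hay, hyw⟩)
    · exact .single haw
    · exact .tail (.single hay) hyw

theorem Bool.eq_of_ne_of_ne {a b c : Bool} (hab : a ≠ b) (hbc : b ≠ c) : a = c :=
  (Bool.eq_not.2 hab).trans (Bool.eq_not.2 hbc.symm).symm

theorem stmt_14_general {V : Type*} (E : V → V → Prop)
    (σ : V → Bool) (hbip : ∀ u v, E u v → σ u ≠ σ v)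
    (hN1 : ∀ u v : V, u ≠ v → ¬ E u v → ¬ E v u →
      {x | E u x} ∩ {x | ∃ y, E v y ∧ E y x} = ∅ ∧
      {x | E v x} ∩ {x | ∃ y, E u y ∧ E y x} = ∅)
    (hN2 : ∀ u a b c, E u a → E a b → E b c → E u c)
    (u v : V) (hcol : σ u ≠ σ v) (huv : ¬ E u v) (hvu : ¬ E v u) :
    ∀ w : V, ¬ (Relation.TransGen E u w ∧ Relation.TransGen E v w) := by
  rintro w ⟨huw, hvw⟩
  obtain ⟨hN1uv, hN1vu⟩ := hN1 u v (ne_of_apply_ne σ hcol) huv hvu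
  rcases (transGen_iff_adj_or_two_step hN2).1 huw with huw | ⟨y, huy, hyw⟩ <;>
    rcases (transGen_iff_adj_or_two_step hN2).1 hvw with hvw | ⟨z, hvz, hzw⟩
  · exact hcol (Bool.eq_of_ne_of_ne (hbip _ _ huw) (hbip _ _ hvw).symm)
  · exact Set.eq_empty_iff_forall_notMem.1 hN1uv w ⟨huw, z, hvz, hzw⟩
  · exact Set.eq_empty_iff_forall_notMem.1 hN1vu w ⟨hvw, y, huy, hyw⟩
  · have hσuw := Bool.eq_of_ne_of_ne (hbip _ _ huy) (hbip _ _ hyw)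
    exact hcol (hσuw.trans (Bool.eq_of_ne_of_ne (hbip _ _ hvz) (hbip _ _ hzw)).symm)

theorem stmt_14 {V : Type*} (E : V → V → Prop)
    (hirr : ∀ u, ¬ E u u)
    (hout : ∀ u, ∃ v, E u v)
    (σ : V → Bool) (hbip : ∀ u v, E u v → σ u ≠ σ v)
    (hN1 : ∀ u v : V, u ≠ v → ¬ E u v → ¬ E v u →
      {x | E u x} ∩ {x | ∃ y, E v y ∧ E y x} = ∅ ∧
      {x | E v x} ∩ {x | ∃ y, E u y ∧ E y x} = ∅)
    (hN2 : ∀ u a b c, E u a → E a b → E b c → E u c)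
    (u v : V) (hcol : σ u ≠ σ v) (huv : ¬ E u v) (hvu : ¬ E v u) :
    ∀ w : V, ¬ (Relation.TransGen E u w ∧ Relation.TransGen E v w) :=
  stmt_14_general E σ hbip hN1 hN2 u v hcol huv hvu
end

section
/- If E satisfies property N(2), then the quotient edge relation Ē also satisfies property N(2) (bitransitivity): for equivalence classes ā, b̄, c̄, d̄, if Ē ā b̄, Ē b̄ c̄, and Ē c̄ d̄, then Ē ā d̄. -/
theorem stmt_16_general {V : Type*} (E : V → V → Prop)
    (hN2 : ∀ u a b c, E u a → E a b → E b c → E u c)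
    (A B C D : Quotient (equivSetoid E))
    (h1 : Ebar E A B) (h2 : Ebar E B C) (h3 : Ebar E C D) :
    Ebar E A D := by
  intro a d ha hd
  obtain ⟨b, hb⟩ := B.exists_rep
  obtain ⟨c, hc⟩ := C.exists_rep
  exact hN2 a b c d (h1 a b ha hb) (h2 b c hb hc) (h3 c d hc hd)

theorem stmt_16 {V : Type*} (E : V → V → Prop)
    (hirr : ∀ u, ¬ E u u)
    (hout : ∀ u, ∃ v, E u v)
    (hN2 : ∀ u a b c, E u a → E a b → E b c → E u c)
    (A B C D : Quotient (equivSetoid E))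
    (h1 : Ebar E A B) (h2 : Ebar E B C) (h3 : Ebar E C D) :
    Ebar E A D :=
  stmt_16_general E hN2 A B C D h1 h2 h3
end

section
/- Assume additionally that E satisfies property N(2) and that no two distinct vertices are equivalent. Define the edge relation E' obtained by deleting all symmetric edges: E' u v holds iff E u v and ¬E v u. Then E' is acyclic: there is no vertex u with Relation.TransGen E' u u. -/
/-!
Under N(2) a walk of length at least three from `a` to `b` can be shortened by two steps, so
`TransGen E a b` means that `b` is reached in one or two steps. In a bipartite digraph two steps
return to the same colour class, so any walk between differently coloured vertices collapses to
a single edge. Closing an `E'`-cycle through `b → u` gives an `E`-walk from `u` to `b` with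
`σ u ≠ σ b`, hence the edge `u → b`, which is exactly what `E' b u` forbids.
-/

namespace Relation

variable {α : Type*} {r : α → α → Prop}

theorem transGen_iff_of_bitransitive (hr : ∀ u a b c, r u a → r a b → r b c → r u c) {a b : α} :
    TransGen r a b ↔ r a b ∨ ∃ x, r a x ∧ r x b := by
  refine ⟨fun h => ?_, ?_⟩
  · induction h with
    | single hab => exact .inl hab
    | tail _ hbc ih =>
      rcases ih with hab | ⟨x, hax, hxb⟩
      · exact .inr ⟨_, hab, hbc⟩
      · exact .inl (hr _ _ _ _ hax hxb hbc)
  · rintro (hab | ⟨x, hax, hxb⟩)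
    · exact .single hab
    · exact .tail (.single hax) hxb

theorem rel_of_transGen_of_color_ne (hr : ∀ u a b c, r u a → r a b → r b c → r u c)
    (σ : α → Bool) (hσ : ∀ u v, r u v → σ u ≠ σ v) {a b : α} (hab : TransGen r a b)
    (hne : σ a ≠ σ b) : r a b := by
  rcases (transGen_iff_of_bitransitive hr).1 hab with hab | ⟨x, hax, hxb⟩
  · exact hab
  · refine absurd ?_ hne
    have hax := hσ _ _ hax
    have hxb := hσ _ _ hxb
    revert hax hxb
    cases σ a <;> cases σ x <;> cases σ b <;> decide

end Relation

theorem stmt_17_general {V : Type*} (E : V → V → Prop)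
    (σ : V → Bool) (hbip : ∀ u v, E u v → σ u ≠ σ v)
    (hN2 : ∀ u a b c, E u a → E a b → E b c → E u c) :
    ¬ ∃ u : V, Relation.TransGen (fun a b => E a b ∧ ¬ E b a) u u := by
  rintro ⟨u, hu⟩
  cases hu with
  | single huu => exact huu.2 huu.1
  | tail hub hbu =>
    have hEub : Relation.TransGen E u _ := Relation.TransGen.mono (fun _ _ h => h.1) _ _ hub
    exact hbu.2 (Relation.rel_of_transGen_of_color_ne hN2 σ hbip hEub (hbip _ _ hbu.1).symm)

theorem stmt_17 {V : Type*} (E : V → V → Prop)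
    (hirr : ∀ u, ¬ E u u)
    (hout : ∀ u, ∃ v, E u v)
    (σ : V → Bool) (hbip : ∀ u v, E u v → σ u ≠ σ v)
    (hN2 : ∀ u a b c, E u a → E a b → E b c → E u c)
    (hnoeq : ∀ u v : V, {x | E u x} = {x | E v x} → {x | E x u} = {x | E x v} → u = v) :
    ¬ ∃ u : V, Relation.TransGen (fun a b => E a b ∧ ¬ E b a) u u :=
  stmt_17_general E σ hbip hN2
end
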